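/- Let G be a finite p-solvable group with abelian Sylow p-subgroups. Then G = O_{p'pp'}(G), i.e., the p'-series of G reaches G in three steps: G/O_{p'p}(G) is a p'-group, where O_{p'p}(G)/O_{p'}(G) is the largest normal p-subgroup of G/O_{p'}(G). -/

import Mathlib

open scoped TensorProduct Classical

namespace ProjIM

variable {G : Type*} [Group G]

/-- The multiplicative 2-cocycle condition for `α : G → G → ℂˣ`. -/
def IsMulCocycle (α : G → G → ℂˣ) : Prop :=
  ∀ x y z, α x y * α (x * y) z = α y z * α x (y * z)

/-- The group of `ℂˣ`-valued 2-cocycles of `G` (trivial action). -/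
def CocycleGroup (G : Type*) [Group G] : Subgroup (G → G → ℂˣ) where
  carrier := {α | IsMulCocycle α}
  one_mem' := by intro x y z; simp
  mul_mem' := by
    intro a b ha hb x y z
    simp only [Pi.mul_apply]
    rw [mul_mul_mul_comm, ha x y z, hb x y z, mul_mul_mul_comm]
  inv_mem' := by
    intro a ha x y z
    simp only [Pi.inv_apply]
    rw [← mul_inv, ← mul_inv, ha x y z]

/-- The subgroup of 2-coboundaries inside the group of 2-cocycles. -/
def coboundaries (G : Type*) [Group G] : Subgroup (CocycleGroup G) where
  carrier := {a | ∃ ζ : G → ℂˣ, ∀ x y, (a : G → G → ℂˣ) x y = ζ x * ζ y * (ζ (x * y))⁻¹}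
  one_mem' := ⟨1, by intro x y; simp⟩
  mul_mem' := by
    rintro a b ⟨ζ, hζ⟩ ⟨η, hη⟩
    refine ⟨ζ * η, fun x y => ?_⟩
    have : ((a * b : CocycleGroup G) : G → G → ℂˣ) x y
        = (a : G → G → ℂˣ) x y * (b : G → G → ℂˣ) x y := rfl
    rw [this, hζ, hη]
    simp only [Pi.mul_apply, mul_inv]
    ac_rfl
  inv_mem' := by
    rintro a ⟨ζ, hζ⟩
    refine ⟨ζ⁻¹, fun x y => ?_⟩
    have : ((a⁻¹ : CocycleGroup G) : G → G → ℂˣ) x y = ((a : G → G → ℂˣ) x y)⁻¹ := rfl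
    rw [this, hζ]
    simp only [Pi.inv_apply, mul_inv, inv_inv]
    try ac_rfl

/-- The Schur multiplier `H²(G, ℂˣ)` (trivial action): cocycles modulo coboundaries. -/
abbrev SchurMultiplier (G : Type*) [Group G] := CocycleGroup G ⧸ coboundaries G

/-- The coclass of a cocycle. -/
def mkClass (a : CocycleGroup G) : SchurMultiplier G := QuotientGroup.mk a

/-- Pullback of cocycles along a group homomorphism. -/
def cocyclePull {H : Type*} [Group H] (f : H →* G) : CocycleGroup G →* CocycleGroup H where
  toFun a := ⟨fun x y => (a : G → G → ℂˣ) (f x) (f y), by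
    intro x y z
    have h := a.2 (f x) (f y) (f z)
    simpa [map_mul] using h⟩
  map_one' := rfl
  map_mul' a b := rfl

/-- Pullback (restriction/inflation) on Schur multipliers along a group homomorphism. -/
def H2Pull {H : Type*} [Group H] (f : H →* G) : SchurMultiplier G →* SchurMultiplier H :=
  QuotientGroup.map _ _ (cocyclePull f) (by
    rintro a ⟨ζ, hζ⟩
    exact ⟨ζ ∘ f, fun x y => by
      simpa [cocyclePull, map_mul] using hζ (f x) (f y)⟩)

/-- Restriction of a coclass to a subgroup. -/
abbrev H2Res (H : Subgroup G) : SchurMultiplier G →* SchurMultiplier H := H2Pull H.subtype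

variable {M M' MV U : Type*} [AddCommGroup M] [Module ℂ M] [AddCommGroup M'] [Module ℂ M']
  [AddCommGroup MV] [Module ℂ MV] [AddCommGroup U] [Module ℂ U]

/-- A projective representation of `G` on the complex vector space `M`,
with an explicit 2-cocycle `α`. -/
structure ProjRep (G : Type*) [Group G] (M : Type*) [AddCommGroup M] [Module ℂ M] where
  α : CocycleGroup G
  φ : G → M ≃ₗ[ℂ] M
  rel : ∀ x y (v : M), φ x (φ y v) = ((α : G → G → ℂˣ) x y : ℂ) • φ (x * y) v

/-- The coclass in the Schur multiplier determined by a projective representation. -/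
def ProjRep.coclass (ρ : ProjRep G M) : SchurMultiplier G := QuotientGroup.mk ρ.α

/-- Irreducibility of a projective representation: the only invariant subspaces are trivial. -/
def ProjRep.Irreducible (ρ : ProjRep G M) : Prop :=
  Nontrivial M ∧ ∀ W : Submodule ℂ M, (∀ g : G, ∀ v ∈ W, ρ.φ g v ∈ W) → W = ⊥ ∨ W = ⊤

/-- Pullback of a projective representation along a group homomorphism
(e.g. restriction to a subgroup, or inflation from a quotient). -/
def ProjRep.pull {H : Type*} [Group H] (f : H →* G) (ρ : ProjRep G M) : ProjRep H M where
  α := cocyclePull f ρ.α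
  φ h := ρ.φ (f h)
  rel x y v := by simpa [map_mul, cocyclePull] using ρ.rel (f x) (f y) v

/-- Restriction of a projective representation to a subgroup. -/
def ProjRep.res (ρ : ProjRep G M) (H : Subgroup G) : ProjRep H M := ρ.pull H.subtype

/-- Tensor product of two projective representations; the cocycles multiply. -/
noncomputable def ProjRep.tprod (ρ : ProjRep G M) (σ : ProjRep G M') :
    ProjRep G (M ⊗[ℂ] M') where
  α := ρ.α * σ.α
  φ g := TensorProduct.congr (ρ.φ g) (σ.φ g)
  rel x y v := by
    have h : (TensorProduct.congr (ρ.φ x) (σ.φ x)).toLinearMap ∘ₗ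
          (TensorProduct.congr (ρ.φ y) (σ.φ y)).toLinearMap
        = (((ρ.α : G → G → ℂˣ) x y : ℂ) * ((σ.α : G → G → ℂˣ) x y : ℂ)) •
          (TensorProduct.congr (ρ.φ (x * y)) (σ.φ (x * y))).toLinearMap := by
      apply TensorProduct.ext'
      intro m n
      simp [TensorProduct.congr_tmul, ρ.rel, σ.rel, TensorProduct.smul_tmul',
        TensorProduct.tmul_smul, smul_smul, mul_comm]
    have h2 := LinearMap.congr_fun h v
    simp only [LinearMap.comp_apply, LinearMap.smul_apply, LinearEquiv.coe_coe] at h2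
    rw [h2]
    first | rfl | simp

open scoped TensorProduct in
/-- Tensor product of a finite family of projective representations. -/
noncomputable def ProjRep.tprodPi {ι : Type*} [Fintype ι] {N : ι → Type*}
    [∀ i, AddCommGroup (N i)] [∀ i, Module ℂ (N i)]
    (ρ : ∀ i, ProjRep G (N i)) : ProjRep G (⨂[ℂ] i, N i) where
  α := ∏ i, (ρ i).α
  φ g := PiTensorProduct.congr fun i => (ρ i).φ g
  rel x y v := by
    have h : (PiTensorProduct.congr fun i => (ρ i).φ x).toLinearMap ∘ₗ
          (PiTensorProduct.congr fun i => (ρ i).φ y).toLinearMap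
        = (∏ i, (((ρ i).α : G → G → ℂˣ) x y : ℂ)) •
          (PiTensorProduct.congr fun i => (ρ i).φ (x * y)).toLinearMap := by
      apply PiTensorProduct.ext
      apply MultilinearMap.ext
      intro m
      simp only [LinearMap.compMultilinearMap_apply, LinearMap.coe_comp,
        LinearEquiv.coe_coe, Function.comp_apply, PiTensorProduct.congr_tprod,
        LinearMap.smul_apply]
      rw [funext fun i => (ρ i).rel x y (m i)]
      rw [MultilinearMap.map_smul_univ]
    have h2 := LinearMap.congr_fun h v
    have hc1 : ((∏ i, (ρ i).α : CocycleGroup G) : G → G → ℂˣ)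
        = ∏ i, ((ρ i).α : G → G → ℂˣ) :=
      SubmonoidClass.coe_finset_prod _ _
    have hcoe : (((∏ i, (ρ i).α : CocycleGroup G) : G → G → ℂˣ) x y : ℂ)
        = ∏ i, (((ρ i).α : G → G → ℂˣ) x y : ℂ) := by
      rw [hc1]
      simp only [Finset.prod_apply]
      exact map_prod (Units.coeHom ℂ) _ _
    simpa [hcoe, smul_smul] using h2

/-- Similarity (projective equivalence) of projective representations: the cocycles differ by
a coboundary `δζ` and the actions are intertwined by a linear equivalence, twisted by `ζ`. -/
def ProjRep.IsSimilar (ρ : ProjRep G M) (σ : ProjRep G M') : Prop :=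
  ∃ (ζ : G → ℂˣ) (e : M ≃ₗ[ℂ] M'),
    (∀ x y : G, (σ.α : G → G → ℂˣ) x y
        = (ρ.α : G → G → ℂˣ) x y * ζ x * ζ y * (ζ (x * y))⁻¹) ∧
    ∀ (g : G) (v : M), σ.φ g (e v) = (ζ g : ℂ) • e (ρ.φ g v)

/-- `V` occurs as an (irreducible) constituent of `ρ`: there is an injective equivariant map
`V → ρ`, up to a coboundary twist of the cocycles. -/
def ProjRep.HasConstituent {K : Type*} [Group K] (ρ : ProjRep K M') (V : ProjRep K MV) : Prop :=
  ∃ (ζ : K → ℂˣ) (e : MV →ₗ[ℂ] M'), Function.Injective e ∧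
    (∀ x y : K, (ρ.α : K → K → ℂˣ) x y
        = (V.α : K → K → ℂˣ) x y * ζ x * ζ y * (ζ (x * y))⁻¹) ∧
    ∀ (x : K) (v : MV), ρ.φ x (e v) = (ζ x : ℂ) • e (V.φ x v)

/-- `ρ` is induced from the projective representation `σ` of the subgroup `J`:
up to a coboundary twist, `σ` embeds `J`-equivariantly into `ρ` and `M` is the (direct) sum of
the translates of its image along a transversal of `J` in `G`. -/
def ProjRep.IsInducedFrom (ρ : ProjRep G M) (J : Subgroup G) (σ : ProjRep J U) : Prop :=
  ∃ ζ : J → ℂˣ,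
    (∀ x y : J, (σ.α : ↥J → ↥J → ℂˣ) x y
        = (ρ.α : G → G → ℂˣ) x y * ζ x * ζ y * (ζ (x * y))⁻¹) ∧
    ∃ e : U →ₗ[ℂ] M, Function.Injective e ∧
      (∀ (j : J) (u : U), ρ.φ j (e u) = ((ζ j : ℂ))⁻¹ • e (σ.φ j u)) ∧
      ∃ T : Finset G, (∀ g : G, ∃! t, t ∈ T ∧ t⁻¹ * g ∈ J) ∧
        (⨆ t ∈ T, (LinearMap.range e).map (ρ.φ t).toLinearMap) = ⊤ ∧
        Module.finrank ℂ M = T.card * Module.finrank ℂ U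

/-- A projective representation of `K` factors through the quotient `K/N` (i.e. it is inflated
from `K/N`) if both the cocycle and the action are constant on cosets of `N`. -/
def ProjRep.FactorsThrough {K : Type*} [Group K] (ρ : ProjRep K M) (N : Subgroup K) : Prop :=
  (∀ x x' y y' : K, x⁻¹ * x' ∈ N → y⁻¹ * y' ∈ N →
      (ρ.α : K → K → ℂˣ) x y = (ρ.α : K → K → ℂˣ) x' y') ∧
  (∀ x x' : K, x⁻¹ * x' ∈ N → ρ.φ x = ρ.φ x')

/-- A coclass of `K` is inflated from `K/N` if it is represented by a cocycle constant on
cosets of `N`. -/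
def InflatedClass {K : Type*} [Group K] (N : Subgroup K) (b : SchurMultiplier K) : Prop :=
  ∃ a : CocycleGroup K, mkClass a = b ∧
    ∀ x x' y y' : K, x⁻¹ * x' ∈ N → y⁻¹ * y' ∈ N →
      (a : K → K → ℂˣ) x y = (a : K → K → ℂˣ) x' y'

/-- The inertia set `I_G^c(V)` of a projective representation `φ` of a (normal) subgroup `N`,
with respect to a global cocycle `a` of `G` restricting to the cocycle of `φ`. -/
def inertiaSet (a : CocycleGroup G) (N : Subgroup G) (φ : N → M ≃ₗ[ℂ] M) : Set G :=
  {g | ∃ y : M ≃ₗ[ℂ] M, ∀ (x : G) (hx : x ∈ N) (hxg : g⁻¹ * x * g ∈ N) (v : M),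
      y.symm ((φ ⟨x, hx⟩) (y v)) =
        (((a : G → G → ℂˣ) x g : ℂ) * (((a : G → G → ℂˣ) g (g⁻¹ * x * g) : ℂ))⁻¹) •
          φ ⟨g⁻¹ * x * g, hxg⟩ v}

/-- The `c`-class sum of `x` in the twisted group algebra `ℂ^c K`
(coordinates with respect to the standard basis). -/
noncomputable def classSum {K : Type*} [Group K] (a : CocycleGroup K) (x : K) : K → ℂ :=
  fun z => ((Nat.card (Subgroup.centralizer {x} : Subgroup K) : ℂ))⁻¹ *
    ∑ᶠ g : K, if z = g⁻¹ * x * g then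
      ((a : K → K → ℂˣ) x g : ℂ) * (((a : K → K → ℂˣ) g (g⁻¹ * x * g) : ℂ))⁻¹ else 0

/-- An element is `c`-regular if its class sum in the twisted group algebra is nonzero. -/
def IsCRegular {K : Type*} [Group K] (a : CocycleGroup K) (x : K) : Prop :=
  classSum a x ≠ 0

/-- Multiplication in the twisted group algebra `ℂ^a K`, in coordinates. -/
noncomputable def twistedMul {K : Type*} [Group K] (a : CocycleGroup K) (f g : K → ℂ) : K → ℂ :=
  fun z => ∑ᶠ x : K, ((a : K → K → ℂˣ) x (x⁻¹ * z) : ℂ) * f x * g (x⁻¹ * z)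

/-- The center of the twisted group algebra `ℂ^a K`, in coordinates. -/
def twistedCenter {K : Type*} [Group K] (a : CocycleGroup K) : Set (K → ℂ) :=
  {f | ∀ g : K → ℂ, twistedMul a f g = twistedMul a g f}

/-- Conjugation by `g ∈ G` on the twisted group algebra `ℂ^a N` of a normal subgroup `N`,
in coordinates: `(xσ)^(gσ) = a x g * (a g (g⁻¹xg))⁻¹ • (g⁻¹xg)σ`. -/
noncomputable def conjTwisted (a : CocycleGroup G) (N : Subgroup G) (hN : N.Normal) (g : G)
    (f : N → ℂ) : N → ℂ :=
  fun z => ((a : G → G → ℂˣ) (g * z * g⁻¹) g : ℂ) * (((a : G → G → ℂˣ) g (z : G) : ℂ))⁻¹ *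
    f ⟨g * z * g⁻¹, hN.conj_mem z.1 z.2 g⟩

/-- `n` is a `π`-number: all its prime divisors lie in `π`. -/
def IsPiNumber (π : Set ℕ) (n : ℕ) : Prop := ∀ p : ℕ, p.Prime → p ∣ n → p ∈ π

/-- `H` is a Hall `π`-subgroup of `G`: its order is a `π`-number and its index a `π'`-number. -/
def IsHall (π : Set ℕ) (H : Subgroup G) : Prop :=
  IsPiNumber π (Nat.card H) ∧ IsPiNumber πᶜ H.index

/-- `G` is `π`-separable: it has a normal series each of whose factors is
a `π`-group or a `π'`-group. -/
def IsPiSeparable (π : Set ℕ) (G : Type*) [Group G] : Prop :=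
  ∃ (l : ℕ) (s : Fin (l + 1) → Subgroup G), s 0 = ⊥ ∧ s (Fin.last l) = ⊤ ∧ Monotone s ∧
    (∀ i, (s i).Normal) ∧
    ∀ i : Fin l, IsPiNumber π ((s i.castSucc).relIndex (s i.succ)) ∨
      IsPiNumber πᶜ ((s i.castSucc).relIndex (s i.succ))

/-- `N = O_π(G)` is the largest normal subgroup of `G` whose order is a `π`-number. -/
def IsPiCore (π : Set ℕ) (N : Subgroup G) : Prop :=
  N.Normal ∧ IsPiNumber π (Nat.card N) ∧
    ∀ K : Subgroup G, K.Normal → IsPiNumber π (Nat.card K) → K ≤ N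

/-- `N₂/N₁ = O_π(G/N₁)`: `N₂` is the largest normal subgroup of `G` containing `N₁` such that
`N₂/N₁` is a `π`-group. -/
def IsPiCoreAbove (π : Set ℕ) (N₁ N₂ : Subgroup G) : Prop :=
  N₂.Normal ∧ N₁ ≤ N₂ ∧ IsPiNumber π (N₁.relIndex N₂) ∧
    ∀ K : Subgroup G, K.Normal → N₁ ≤ K → IsPiNumber π (N₁.relIndex K) → K ≤ N₂

/-- The `π`-part of a natural number. -/
noncomputable def piPart (π : Set ℕ) (n : ℕ) : ℕ :=
  n.factorization.prod fun p k => if p ∈ π then p ^ k else 1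

/-- The set of primes dividing the degree of some irreducible `c`-module of `G`. -/
def PiIrr (G : Type*) [Group G] (c : SchurMultiplier G) : Set ℕ :=
  {p | p.Prime ∧ ∃ (n : ℕ) (ρ : ProjRep G (Fin n → ℂ)), ρ.Irreducible ∧ ρ.coclass = c ∧ p ∣ n}

/-! Modulo `N₁ = O_{p'}(G)` the hypotheses say that `O_{p'}` is trivial and `F = N₂/N₁` is
`O_p`. In a `π`-separable group with trivial `O_{π'}`, `O_π` contains its centralizer `C`
(Hall–Higman): otherwise pick a chief factor `K/Z` of `G` with `Z = C ∩ F < K ≤ C`. It lies in a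
factor of the `π`-series, so it is a `π`-group, and then `K ≤ F`; or a `π'`-group, and then the
central subgroup `Z` has a complement in `K` (Schur–Zassenhaus) which consists of the
`π'`-elements of `K` and is therefore a nontrivial normal `π'`-subgroup of `G`. Finally an abelian
Sylow `p`-subgroup `P` contains the normal `p`-subgroup `F` and so centralizes it; hence `P ≤ F`
and `F` has `p'`-index. -/

open Subgroup

theorem IsPiNumber.of_dvd {π : Set ℕ} {m n : ℕ} (h : IsPiNumber π n) (hd : m ∣ n) :
    IsPiNumber π m :=
  fun q hq hqm => h q hq (hqm.trans hd)

theorem IsPiNumber.mul {π : Set ℕ} {m n : ℕ} (hm : IsPiNumber π m) (hn : IsPiNumber π n) :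
    IsPiNumber π (m * n) :=
  fun q hq hqd => ((Nat.Prime.dvd_mul hq).mp hqd).elim (hm q hq) (hn q hq)

theorem IsPiNumber.coprime {π : Set ℕ} {m n : ℕ} (hm : IsPiNumber π m) (hn : IsPiNumber πᶜ n) :
    m.Coprime n :=
  Nat.coprime_of_dvd fun q hq hqm hqn => hn q hq hqn (hm q hq hqm)

theorem isPiNumber_compl_singleton_of_not_dvd {p n : ℕ} (h : ¬ p ∣ n) :
    IsPiNumber ({p} : Set ℕ)ᶜ n :=
  fun _ _ hqn hqp => h (Set.mem_singleton_iff.mp hqp ▸ hqn)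

theorem IsPiNumber.isPGroup {p : ℕ} {H : Type*} [Group H] [Finite H]
    (h : IsPiNumber {p} (Nat.card H)) : IsPGroup p H :=
  IsPGroup.of_card
    (Nat.eq_prime_pow_of_unique_prime_dvd Nat.card_pos.ne' fun hq hqd => h _ hq hqd)

theorem _root_.Fin.exists_not_castSucc_and_succ {l : ℕ} {P : Fin (l + 1) → Prop} (h0 : ¬ P 0)
    (hl : P (Fin.last l)) : ∃ i : Fin l, ¬ P i.castSucc ∧ P i.succ := by
  by_contra! h
  exact Fin.induction h0 h (Fin.last l) hl

theorem _root_.Subgroup.card_mul_relIndex {H K : Subgroup G} (h : H ≤ K) :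
    Nat.card H * H.relIndex K = Nat.card K := by
  simpa only [relIndex_bot_left] using relIndex_mul_relIndex ⊥ H K bot_le h

theorem _root_.Subgroup.normal_of_le_center {H : Subgroup G} (h : H ≤ center G) : H.Normal :=
  ⟨fun n hn g => by rwa [mem_center_iff.mp (h hn) g, mul_inv_cancel_right]⟩

theorem _root_.Subgroup.IsComplement'.normal_right_of_le_center {N H : Subgroup G}
    (hc : N.IsComplement' H) (hN : N ≤ center G) : H.Normal := by
  rw [← normalizer_eq_top_iff, eq_top_iff, ← hc.sup_eq_top]
  exact sup_le (hN.trans (center_le_normalizer _)) le_normalizer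

theorem _root_.Subgroup.mem_of_coprime_orderOf_index {H : Subgroup G} [H.Normal] {x : G}
    (hx : (orderOf x).Coprime H.index) : x ∈ H := by
  have hx1 : orderOf (x : G ⧸ H) = 1 :=
    Nat.eq_one_of_dvd_coprimes hx (orderOf_map_dvd (QuotientGroup.mk' H) x)
      (orderOf_dvd_natCard _)
  exact (QuotientGroup.eq_one_iff x).mp (orderOf_eq_one_iff.mp hx1)

theorem _root_.QuotientGroup.card_map_mk' (N H : Subgroup G) [N.Normal] :
    Nat.card (H.map (QuotientGroup.mk' N)) = N.relIndex H := by
  rw [← relIndex_ker, QuotientGroup.ker_mk']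

theorem _root_.QuotientGroup.relIndex_comap_mk' (N : Subgroup G) [N.Normal]
    (K : Subgroup (G ⧸ N)) : N.relIndex (K.comap (QuotientGroup.mk' N)) = Nat.card K := by
  rw [← QuotientGroup.card_map_mk',
    map_comap_eq_self_of_surjective (QuotientGroup.mk'_surjective N)]

theorem IsPiSeparable.of_surjective {π : Set ℕ} {H : Type*} [Group H] (hsol : IsPiSeparable π G)
    {f : G →* H} (hf : Function.Surjective f) : IsPiSeparable π H := by
  obtain ⟨l, s, hs0, hsl, hmono, hnorm, hfac⟩ := hsol
  refine ⟨l, fun i => (s i).map f, by simp [hs0], by simp [hsl, map_top_of_surjective f hf],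
    fun i j hij => map_mono (hmono hij), fun i => (hnorm i).map f hf, fun i => ?_⟩
  have hd : ((s i.castSucc).map f).relIndex ((s i.succ).map f) ∣
      (s i.castSucc).relIndex (s i.succ) := by
    rw [← relIndex_comap, comap_map_eq]
    exact relIndex_dvd_of_le_left _ le_sup_left
  exact (hfac i).imp (·.of_dvd hd) (·.of_dvd hd)

theorem IsPiCore.isPiCoreAbove_self {π : Set ℕ} {N : Subgroup G} (h : IsPiCore π N) :
    IsPiCoreAbove π N N :=
  ⟨h.1, le_rfl, by
    rw [relIndex_self]; exact fun q hq hq1 => absurd (Nat.dvd_one.mp hq1) hq.ne_one,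
    fun K hK hNK hπ => h.2.2 K hK (card_mul_relIndex hNK ▸ h.2.1.mul hπ)⟩

theorem IsPiCoreAbove.isPiCore_map {π : Set ℕ} {N₁ N₂ : Subgroup G} [N₁.Normal]
    (h : IsPiCoreAbove π N₁ N₂) : IsPiCore π (N₂.map (QuotientGroup.mk' N₁)) := by
  obtain ⟨hN₂, -, hπ, hmax⟩ := h
  have hf := QuotientGroup.mk'_surjective N₁
  refine ⟨hN₂.map _ hf, by rwa [QuotientGroup.card_map_mk'], fun K hK hKπ => ?_⟩
  rw [← map_comap_eq_self_of_surjective hf K]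
  refine map_mono (hmax _ (hK.comap _) ?_ (by rwa [QuotientGroup.relIndex_comap_mk']))
  simpa only [QuotientGroup.ker_mk'] using MonoidHom.ker_le_comap (QuotientGroup.mk' N₁) K

theorem _root_.Subgroup.relIndex_dvd_relIndex_of_sup_eq {Z K N₀ N₁ : Subgroup G} [Z.Normal]
    [N₀.Normal] (hN : N₀ ≤ N₁) (hK : (K ⊓ N₁) ⊔ Z = K) (hZ : K ⊓ N₀ ≤ Z) :
    Z.relIndex K ∣ N₀.relIndex N₁ := by
  set A := K ⊓ N₁
  have hZA : Z.relIndex K = Z.relIndex A := by rw [← hK, relIndex_sup_right]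
  have hA : (K ⊓ N₀).relIndex A = N₀.relIndex A := by
    rw [← inf_relIndex_right, ← inf_relIndex_right N₀]
    congr 1
    ext x
    simp only [A, mem_inf]
    tauto
  have hAN : N₀.relIndex A ∣ N₀.relIndex N₁ := by
    rw [← relIndex_sup_right A N₀]
    exact Dvd.intro _ (relIndex_mul_relIndex N₀ (A ⊔ N₀) N₁ le_sup_right
      (sup_le inf_le_right hN))
  rw [hZA]
  exact (hA ▸ relIndex_dvd_of_le_left A hZ).trans hAN

theorem IsPiSeparable.isPiNumber_or_compl_relIndex {π : Set ℕ} (hsol : IsPiSeparable π G)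
    {Z K : Subgroup G} [Z.Normal] [K.Normal] (hZK : Z < K)
    (hchief : ∀ L : Subgroup G, L.Normal → Z ≤ L → L ≤ K → L = Z ∨ L = K) :
    IsPiNumber π (Z.relIndex K) ∨ IsPiNumber πᶜ (Z.relIndex K) := by
  obtain ⟨l, s, hs0, hsl, hmono, hnorm, hfac⟩ := hsol
  obtain ⟨i, hi, hi'⟩ := Fin.exists_not_castSucc_and_succ (P := fun j => (K ⊓ s j) ⊔ Z = K)
    (by simpa [hs0] using hZK.ne) (by simpa [hsl] using hZK.le)
  have := hnorm i.castSucc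
  have hlow : K ⊓ s i.castSucc ≤ Z :=
    le_sup_left.trans ((hchief _ inferInstance le_sup_right
      (sup_le inf_le_left hZK.le)).resolve_right hi).le
  have hdvd := relIndex_dvd_relIndex_of_sup_eq (hmono (Fin.castSucc_le_succ i)) hi' hlow
  exact (hfac i).imp (·.of_dvd hdvd) (·.of_dvd hdvd)

theorem exists_normal_card_eq_relIndex_of_le_centralizer [Finite G] {Z K : Subgroup G} [K.Normal]
    (hZK : Z ≤ K) (hZ : Z ≤ centralizer K) (hcop : (Nat.card Z).Coprime (Z.relIndex K)) :
    ∃ H : Subgroup G, H.Normal ∧ Nat.card H = Z.relIndex K := by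
  set Z' := Z.subgroupOf K
  have hZ'center : Z' ≤ center K := fun z hz =>
    mem_center_iff.mpr fun k => Subtype.ext (mem_centralizer_iff.mp (hZ hz) k k.2)
  have := normal_of_le_center hZ'center
  have hcard : Nat.card Z' = Nat.card Z := Nat.card_congr (subgroupOfEquivOfLe hZK).toEquiv
  obtain ⟨H, hc⟩ :=
    exists_right_complement'_of_coprime (hcard ▸ hcop : (Nat.card Z').Coprime Z'.index)
  have := hc.normal_right_of_le_center hZ'center
  have hH : Nat.card H = Z.relIndex K := hc.symm.index_eq_card.symm
  have hHindex : H.index = Nat.card Z := hc.index_eq_card.trans hcard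
  refine ⟨H.map K.subtype, ⟨fun x hx g => ?_⟩,
    by rw [card_map_of_injective K.subtype_injective, hH]⟩
  -- `H` contains every element of `K` of order prime to `[K : H] = |Z|`, hence all its conjugates.
  obtain ⟨y, hy, rfl⟩ := hx
  refine ⟨⟨g * y * g⁻¹, Normal.conj_mem ‹_› _ y.2 g⟩, mem_of_coprime_orderOf_index ?_, rfl⟩
  rw [hHindex, Subgroup.orderOf_mk, ← (SemiconjBy.conj_mk g (y : G)).orderOf_eq,
    Subgroup.orderOf_coe]
  exact Nat.Coprime.coprime_dvd_left (hH ▸ Subgroup.orderOf_dvd_natCard H hy) hcop.symm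

theorem IsPiCore.centralizer_le [Finite G] {π : Set ℕ} {F : Subgroup G} (hF : IsPiCore π F)
    (hsol : IsPiSeparable π G) (h₀ : IsPiCore πᶜ (⊥ : Subgroup G)) :
    centralizer (F : Set G) ≤ F := by
  have := hF.1
  set C := centralizer (F : Set G)
  set Z := C ⊓ F
  by_contra hCF
  have hZC : Z < C := inf_le_left.lt_of_ne fun h => hCF (h ▸ inf_le_right)
  obtain ⟨K, hKC, ⟨hK, hZK, -⟩, hKmin⟩ := exists_minimal_le_of_wellFoundedLT
    (fun K : Subgroup G => K.Normal ∧ Z < K ∧ K ≤ C) C ⟨inferInstance, hZC, le_rfl⟩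
  have hchief : ∀ L : Subgroup G, L.Normal → Z ≤ L → L ≤ K → L = Z ∨ L = K :=
    fun L hL hZL hLK =>
      hZL.eq_or_lt.imp Eq.symm fun h => le_antisymm hLK (hKmin ⟨hL, h, hLK.trans hKC⟩ hLK)
  have hZπ : IsPiNumber π (Nat.card Z) := hF.2.1.of_dvd (card_dvd_of_le inf_le_right)
  rcases hsol.isPiNumber_or_compl_relIndex hZK hchief with hπ | hπ'
  · exact hZK.not_ge (le_inf hKC (hF.2.2 K hK (card_mul_relIndex hZK.le ▸ hZπ.mul hπ)))
  · obtain ⟨H, hH, hHcard⟩ := exists_normal_card_eq_relIndex_of_le_centralizer hZK.le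
      (le_centralizer_iff.mpr (hKC.trans (Subgroup.centralizer_le inf_le_right)))
      (hZπ.coprime hπ')
    rw [le_bot_iff.mp (h₀.2.2 H hH (hHcard ▸ hπ')), card_bot] at hHcard
    exact hZK.not_ge (relIndex_eq_one.mp hHcard.symm)

theorem IsPiCore.not_dvd_index [Finite G] {p : ℕ} [Fact p.Prime] {F : Subgroup G}
    (hF : IsPiCore {p} F) (hsol : IsPiSeparable {p} G)
    (h₀ : IsPiCore ({p} : Set ℕ)ᶜ (⊥ : Subgroup G)) (P : Sylow p G)
    [IsMulCommutative (P : Subgroup G)] : ¬ p ∣ F.index := by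
  have := hF.1
  have hFP : F ≤ P := hF.2.1.isPGroup.le_sylow_of_normal P
  have hPF : (P : Subgroup G) ≤ F := (le_centralizer (P : Subgroup G)).trans
    ((Subgroup.centralizer_le hFP).trans (hF.centralizer_le hsol h₀))
  exact fun h => P.not_dvd_index (h.trans (index_dvd_of_le hPF))

/-- **Hall–Higman for abelian Sylow subgroups.** Let `G` be a finite `p`-solvable group with
abelian Sylow `p`-subgroups. Then `G = O_{p'pp'}(G)`: for `N₁ = O_{p'}(G)` and `N₂ = O_{p'p}(G)`
(characterized as the largest normal subgroups with the corresponding properties), the quotient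
`G/N₂` is a `p'`-group, i.e. the `p'`-series of `G` reaches `G` in three steps. -/
theorem statement_19 {G : Type} [Group G] [Fintype G] (p : ℕ) (hp : p.Prime)
    (hsol : IsPiSeparable {p} G)
    (hab : ∀ P : Sylow p G, ∀ x y : ↥(P : Subgroup G), x * y = y * x) :
    ∀ N₁ N₂ : Subgroup G, IsPiCore ({p} : Set ℕ)ᶜ N₁ →
      IsPiCoreAbove {p} N₁ N₂ → IsPiNumber ({p} : Set ℕ)ᶜ N₂.index := by
  intro N₁ N₂ hN₁ hN₂
  have : Fact p.Prime := ⟨hp⟩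
  have := hN₁.1
  have hf := QuotientGroup.mk'_surjective N₁
  have h₀ : IsPiCore ({p} : Set ℕ)ᶜ (⊥ : Subgroup (G ⧸ N₁)) := by
    simpa only [QuotientGroup.map_mk'_self] using hN₁.isPiCoreAbove_self.isPiCore_map
  obtain ⟨P⟩ : Nonempty (Sylow p G) := inferInstance
  have := IsMulCommutative.of_comm (hab P)
  have : IsMulCommutative (P.mapSurjective hf : Subgroup (G ⧸ N₁)) := map_isMulCommutative _ _
  apply isPiNumber_compl_singleton_of_not_dvd
  rw [← index_map_eq N₂ hf ((QuotientGroup.ker_mk' N₁).le.trans hN₂.2.1)]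
  exact hN₂.isPiCore_map.not_dvd_index (hsol.of_surjective hf) h₀ (P.mapSurjective hf)

end ProjIM
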